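/- For every integer m ≥ 1, ∫₀¹ x^{m−1} {1/x}^m dx = H_m − γ − Σ_{j=1}^{m−1} ζ(j+1)/(j+1), where H_m = Σ_{i=1}^{m} 1/i is the m-th harmonic number, γ is the Euler–Mascheroni constant, and ζ is the Riemann zeta function (an empty sum is taken to be zero). -/

import Mathlib

/-!
On `(1/(n+2), 1/(n+1)]` one has `⌊1/x⌋ = n + 1`, so integrals against `{1/x}` and `⌊1/x⌋`
split into elementary pieces. Summing them, `∫₀¹ {1/x} dx` is the limit of
`1 - (H_{N+1} - log (N+1))`, i.e. `1 - γ`, and for `p ≥ 1`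
`∫₀¹ x^p ⌊1/x⌋ {1/x}^p dx = Σ_{n ≥ 2} n^{-(p+1)} / (p+1) = (ζ(p+1) - 1) / (p+1)`.
Since `x {1/x} = 1 - x ⌊1/x⌋`, the moments `I_k = ∫₀¹ x^k {1/x}^(k+1) dx` satisfy
`I_{k+1} = I_k - ∫₀¹ x^(k+1) ⌊1/x⌋ {1/x}^(k+1) dx`, and the formula follows by induction.
-/

open MeasureTheory Real Set Filter Topology intervalIntegral

lemma floor_one_div_of_mem_Ioc {n : ℕ} {x : ℝ}
    (hx : x ∈ Ioc (1 / (n + 2) : ℝ) (1 / (n + 1))) :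
    ⌊1 / x⌋ = n + 1 := by
  have hx₀ : 0 < x := (by positivity : (0 : ℝ) < 1 / (n + 2)).trans hx.1
  rw [Int.floor_eq_iff]
  push_cast
  constructor
  · rw [le_one_div (by positivity) hx₀]
    exact hx.2
  · rw [one_div_lt hx₀ (by positivity), add_assoc, one_add_one_eq_two]
    exact hx.1

lemma fract_one_div_of_mem_Ioc {n : ℕ} {x : ℝ}
    (hx : x ∈ Ioc (1 / (n + 2) : ℝ) (1 / (n + 1))) :
    Int.fract (1 / x) = 1 / x - (n + 1) := by
  rw [Int.fract, floor_one_div_of_mem_Ioc hx]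
  push_cast
  rfl

lemma pairwise_disjoint_Ioc_one_div :
    Pairwise (Function.onFun Disjoint fun n : ℕ => Ioc (1 / (n + 2) : ℝ) (1 / (n + 1))) := by
  intro i j hij
  refine Set.disjoint_left.2 fun x hi hj => hij ?_
  have := (floor_one_div_of_mem_Ioc hi).symm.trans (floor_one_div_of_mem_Ioc hj)
  omega

lemma iUnion_Ioc_one_div : ⋃ n : ℕ, Ioc (1 / (n + 2) : ℝ) (1 / (n + 1)) = Ioc 0 1 := by
  ext x
  simp only [mem_iUnion]
  constructor
  · rintro ⟨n, hn⟩
    exact ⟨(by positivity : (0 : ℝ) < 1 / (n + 2)).trans hn.1,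
      hn.2.trans (div_le_one_of_le₀ (by linarith [n.cast_nonneg (α := ℝ)]) (by positivity))⟩
  · rintro ⟨hx₀, hx₁⟩
    have hk : 1 ≤ ⌊1 / x⌋₊ := Nat.le_floor (by simpa using one_le_one_div hx₀ hx₁)
    refine ⟨⌊1 / x⌋₊ - 1, ?_, ?_⟩
    · rw [one_div_lt (by positivity) hx₀]
      push_cast [hk]
      linarith [Nat.lt_floor_add_one (1 / x)]
    · rw [le_one_div hx₀ (by positivity)]
      push_cast [hk]
      linarith [Nat.floor_le (by positivity : 0 ≤ 1 / x)]

lemma one_div_add_two_le (n : ℕ) : (1 / (n + 2) : ℝ) ≤ 1 / (n + 1) :=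
  one_div_le_one_div_of_le (by positivity) (by linarith)

theorem hasSum_intervalIntegral_Ioc_one_div {E : Type*} [NormedAddCommGroup E] [NormedSpace ℝ E]
    {f : ℝ → E} (hf : IntervalIntegrable f volume 0 1) :
    HasSum (fun n : ℕ => ∫ x in (1 / (n + 2) : ℝ)..(1 / (n + 1)), f x)
      (∫ x in (0 : ℝ)..1, f x) := by
  have h := hasSum_integral_iUnion (fun n => measurableSet_Ioc) pairwise_disjoint_Ioc_one_div
    (iUnion_Ioc_one_div ▸ (intervalIntegrable_iff_integrableOn_Ioc_of_le zero_le_one).1 hf)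
  rw [iUnion_Ioc_one_div] at h
  simpa only [integral_of_le zero_le_one, integral_of_le (one_div_add_two_le _)] using h

lemma integral_fract_one_div_Ioc (n : ℕ) :
    ∫ x in (1 / (n + 2) : ℝ)..(1 / (n + 1)), Int.fract (1 / x) =
      log (n + 2) - log (n + 1) - 1 / (n + 2) := by
  have hfract : EqOn (fun x : ℝ => Int.fract (1 / x)) (fun x => x⁻¹ - (n + 1))
      (uIoc (1 / (n + 2)) (1 / (n + 1))) := fun x hx => by
    rw [uIoc_of_le (one_div_add_two_le n)] at hx
    dsimp only
    rw [fract_one_div_of_mem_Ioc hx, one_div]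
  have h₀ : (0 : ℝ) ∉ uIcc (1 / ((n : ℝ) + 2)) (1 / (n + 1)) :=
    notMem_uIcc_of_lt (by positivity) (by positivity)
  rw [integral_congr_ae (ae_of_all _ hfract),
    integral_sub (intervalIntegrable_inv_iff.2 (Or.inr h₀)) intervalIntegrable_const,
    integral_inv h₀, intervalIntegral.integral_const, smul_eq_mul,
    div_div_div_cancel_left' _ _ one_ne_zero, log_div (by positivity) (by positivity)]
  field_simp
  ring

lemma integral_pow_mul_floor_mul_fract_pow_Ioc (p n : ℕ) :
    ∫ x in (1 / (n + 2) : ℝ)..(1 / (n + 1)), x ^ p * ⌊1 / x⌋ * Int.fract (1 / x) ^ p =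
      (1 / (n + 2)) ^ (p + 1) / (p + 1) := by
  have hpiece : EqOn (fun x : ℝ => x ^ p * ⌊1 / x⌋ * Int.fract (1 / x) ^ p)
      (fun x => (n + 1) * (1 - (n + 1) * x) ^ p) (uIoc (1 / (n + 2)) (1 / (n + 1))) :=
    fun x hx => by
      rw [uIoc_of_le (one_div_add_two_le n)] at hx
      have hx₀ : x ≠ 0 := ((by positivity : (0 : ℝ) < 1 / (n + 2)).trans hx.1).ne'
      simp only [floor_one_div_of_mem_Ioc hx, fract_one_div_of_mem_Ioc hx]
      push_cast
      rw [mul_right_comm, ← mul_pow, mul_sub, mul_one_div_cancel hx₀, mul_comm x]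
      ring
  rw [integral_congr_ae (ae_of_all _ hpiece), intervalIntegral.integral_const_mul,
    integral_comp_sub_mul (fun x => x ^ p) (by positivity : (n : ℝ) + 1 ≠ 0), integral_pow]
  have h₁ : 1 - ((n : ℝ) + 1) * (1 / (n + 1)) = 0 := by field_simp; ring
  have h₂ : 1 - ((n : ℝ) + 1) * (1 / (n + 2)) = 1 / (n + 2) := by field_simp; ring
  rw [h₁, h₂, zero_pow p.succ_ne_zero, sub_zero, smul_eq_mul]
  field_simp

lemma intervalIntegrable_pow_mul_fract_one_div_pow (p q : ℕ) :
    IntervalIntegrable (fun x : ℝ => x ^ p * Int.fract (1 / x) ^ q) volume 0 1 := by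
  rw [intervalIntegrable_iff_integrableOn_Ioc_of_le zero_le_one]
  refine Measure.integrableOn_of_bounded (M := 1) measure_Ioc_lt_top.ne (by fun_prop) ?_
  refine (ae_restrict_iff' measurableSet_Ioc).2 (ae_of_all _ fun x hx => ?_)
  have hfract := Int.fract_nonneg (1 / x)
  rw [norm_of_nonneg (by have := hx.1.le; positivity)]
  exact mul_le_one₀ (pow_le_one₀ hx.1.le hx.2) (by positivity)
    (pow_le_one₀ hfract (Int.fract_lt_one _).le)

lemma pow_mul_floor_mul_fract_pow_eq_sub (p : ℕ) (x : ℝ) :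
    x ^ (p + 1) * ⌊1 / x⌋ * Int.fract (1 / x) ^ (p + 1) =
      x ^ p * Int.fract (1 / x) ^ (p + 1) - x ^ (p + 1) * Int.fract (1 / x) ^ (p + 1 + 1) := by
  rcases eq_or_ne x 0 with rfl | hx
  · simp
  · have hxy : x * Int.fract (1 / x) = 1 - x * ⌊1 / x⌋ := by
      rw [Int.fract, mul_sub, mul_one_div_cancel hx]
    calc x ^ (p + 1) * ⌊1 / x⌋ * Int.fract (1 / x) ^ (p + 1)
        = x ^ p * Int.fract (1 / x) ^ (p + 1) * (1 - (1 - x * ⌊1 / x⌋)) := by ring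
      _ = _ := by rw [← hxy]; ring

lemma hasSum_one_div_add_two_pow {k : ℕ} (hk : 1 < k) :
    HasSum (fun n : ℕ => (1 / ((n : ℝ) + 2)) ^ k) ((riemannZeta k).re - 1) := by
  have hzeta : HasSum (fun n : ℕ => 1 / (n : ℝ) ^ k) (riemannZeta k).re := by
    have hreal : riemannZeta k = ((∑' n : ℕ, 1 / (n : ℝ) ^ k : ℝ) : ℂ) := by
      rw [zeta_nat_eq_tsum_of_gt_one hk, Complex.ofReal_tsum]
      push_cast
      rfl
    rw [hreal, Complex.ofReal_re]
    exact (Real.summable_one_div_nat_pow.2 hk).hasSum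
  simpa [Finset.sum_range_succ, zero_pow (by omega : k ≠ 0), add_assoc, one_add_one_eq_two] using
    (hasSum_nat_add_iff' 2).2 hzeta

lemma sum_range_log_sub_log_sub_one_div (N : ℕ) :
    ∑ n ∈ Finset.range N, (log (n + 2) - log (n + 1) - 1 / (n + 2) : ℝ) =
      1 - (harmonic (N + 1) - log (N + 1)) := by
  induction N with
  | zero => simp
  | succ N ih =>
    rw [Finset.sum_range_succ, ih, harmonic_succ (N + 1)]
    push_cast
    ring_nf

theorem integral_fract_one_div :
    ∫ x in (0 : ℝ)..1, Int.fract (1 / x) = 1 - eulerMascheroniConstant := by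
  have hpieces := hasSum_intervalIntegral_Ioc_one_div (f := fun x => Int.fract (1 / x))
    (by simpa using intervalIntegrable_pow_mul_fract_one_div_pow 0 1)
  simp only [integral_fract_one_div_Ioc] at hpieces
  refine tendsto_nhds_unique hpieces.tendsto_sum_nat ?_
  simp only [sum_range_log_sub_log_sub_one_div]
  refine tendsto_const_nhds.sub ?_
  refine (tendsto_harmonic_sub_log.comp (tendsto_add_atTop_nat 1)).congr fun N => ?_
  simp only [Function.comp_apply, Nat.cast_add, Nat.cast_one]

theorem integral_pow_mul_floor_mul_fract_pow {p : ℕ} (hp : 1 ≤ p) :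
    ∫ x in (0 : ℝ)..1, x ^ p * ⌊1 / x⌋ * Int.fract (1 / x) ^ p =
      ((riemannZeta ((p : ℂ) + 1)).re - 1) / (p + 1) := by
  obtain ⟨q, rfl⟩ := Nat.exists_eq_add_of_le' hp
  have hint : IntervalIntegrable
      (fun x : ℝ => x ^ (q + 1) * ⌊1 / x⌋ * Int.fract (1 / x) ^ (q + 1)) volume 0 1 := by
    simpa only [pow_mul_floor_mul_fract_pow_eq_sub] using
      (intervalIntegrable_pow_mul_fract_one_div_pow q (q + 1)).sub
        (intervalIntegrable_pow_mul_fract_one_div_pow (q + 1) (q + 1 + 1))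
  have hpieces := hasSum_intervalIntegral_Ioc_one_div hint
  simp only [integral_pow_mul_floor_mul_fract_pow_Ioc] at hpieces
  refine hpieces.unique ?_
  have hzeta := (hasSum_one_div_add_two_pow (k := q + 1 + 1) (by omega)).div_const
    ((q + 1 : ℕ) + 1 : ℝ)
  push_cast at hzeta ⊢
  exact hzeta

theorem integral_pow_mul_fract_one_div_pow_succ (k : ℕ) :
    ∫ x in (0 : ℝ)..1, x ^ k * Int.fract (1 / x) ^ (k + 1) =
      (∑ i ∈ Finset.Icc 1 (k + 1), (1 : ℝ) / i) - eulerMascheroniConstant -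
        ∑ j ∈ Finset.Icc 1 k, (riemannZeta ((j : ℂ) + 1)).re / ((j : ℝ) + 1) := by
  induction k with
  | zero =>
    simp only [pow_zero, one_mul, zero_add, pow_one, integral_fract_one_div]
    norm_num
  | succ k ih =>
    have hstep := integral_sub (intervalIntegrable_pow_mul_fract_one_div_pow k (k + 1))
      (intervalIntegrable_pow_mul_fract_one_div_pow (k + 1) (k + 1 + 1))
    simp only [← pow_mul_floor_mul_fract_pow_eq_sub,
      integral_pow_mul_floor_mul_fract_pow (by omega : 1 ≤ k + 1)] at hstep
    rw [Finset.sum_Icc_succ_top (by omega : 1 ≤ k + 1 + 1) (fun i : ℕ => (1 : ℝ) / i),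
      Finset.sum_Icc_succ_top (by omega : 1 ≤ k + 1)
        (fun j : ℕ => (riemannZeta ((j : ℂ) + 1)).re / ((j : ℝ) + 1))]
    push_cast at hstep ⊢
    rw [sub_div] at hstep
    linarith

theorem fractional_moment_pow_diag (m : ℕ) (hm : 1 ≤ m) :
    ∫ x in (0:ℝ)..1, x ^ (m - 1) * (Int.fract (1 / x)) ^ m =
      (∑ i ∈ Finset.Icc 1 m, (1 : ℝ) / i) - Real.eulerMascheroniConstant -
        ∑ j ∈ Finset.Icc 1 (m - 1), (riemannZeta ((j : ℂ) + 1)).re / ((j : ℝ) + 1) := by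
  obtain ⟨k, rfl⟩ := Nat.exists_eq_add_of_le' hm
  simpa using integral_pow_mul_fract_one_div_pow_succ k
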